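/- For positive integers m₁, n₁, the ratio m₁^(n₁-1) * n₁^(m₁-1) / C(m₁ n₁, m₁+n₁-1) tends to 0 as m₁, n₁ → ∞; hence when G acts trivially on X and Y (so extreme measures correspond to maximal good sets), |E(μ₁,μ₂)| / C(m₁₂, m₁+n₁-1) → 0 as m₁, n₁ → ∞. -/

import Mathlib

/-!
An extreme point `w` of the transportation polytope `Kset μ₁ μ₂` is determined by its support,
and that support carries no nonzero weight with zero marginals: otherwise `w ± t d` would stay in
the polytope for small `t`. A rank count shows such a support has a cell alone in its row or in
its column; pruning these leaves one by one encodes the support by a pair of partial maps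
`Y → Option X`, `X → Option Y`, so there are at most `(m + 1) ^ n * (n + 1) ^ m` extreme points.
Against this, `C(m n, m + n - 1) ≥ ((m - 1) (n - 1)) ^ (m + n - 1) / (m + n - 1)!`, and Stirling's
upper bound on the factorials makes the ratio `O((m + n) ^ 3 * (5 / (2 e)) ^ (m + n))` for
`m, n ≥ 9`, which tends to `0` since `e > 5 / 2`.
-/

open Finset

/-- Probability weights on `X × Y` with marginals `μ₁`, `μ₂` (trivial group). -/
def Kset {X Y : Type} [Fintype X] [Fintype Y] (μ₁ : X → ℝ) (μ₂ : Y → ℝ) :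
    Set (X × Y → ℝ) :=
  {w | (∀ p, 0 ≤ w p) ∧ (∀ x, ∑ y, w (x, y) = μ₁ x) ∧ (∀ y, ∑ x, w (x, y) = μ₂ y)}

open Filter Topology
open scoped Nat

section MarginalIndep

variable {X Y : Type*} [Fintype X] [Fintype Y]

/-- These are exactly the edge sets of forests in the complete bipartite graph on `X ⊕ Y`
(the good sets). -/
def MarginalIndep (S : Finset (X × Y)) : Prop :=
  ∀ d : X × Y → ℝ, (∀ p ∉ S, d p = 0) → (∀ x, ∑ y, d (x, y) = 0) → (∀ y, ∑ x, d (x, y) = 0) →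
    d = 0

theorem MarginalIndep.mono {S T : Finset (X × Y)} (hT : MarginalIndep T) (hST : S ⊆ T) :
    MarginalIndep S :=
  fun d hd => hT d fun p hp => hd p fun h => hp (hST h)

variable [DecidableEq X] [DecidableEq Y]

theorem marginals_eq_zero_of_forall_ne {S : Finset (X × Y)} {d : X × Y → ℝ}
    (hd : ∀ p ∉ S, d p = 0) (x₀ : X) (hrow : ∀ x ∈ S.image Prod.fst, x ≠ x₀ → ∑ y, d (x, y) = 0)
    (hcol : ∀ y ∈ S.image Prod.snd, ∑ x, d (x, y) = 0) :
    (∀ x, ∑ y, d (x, y) = 0) ∧ ∀ y, ∑ x, d (x, y) = 0 := by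
  have hcol' : ∀ y, ∑ x, d (x, y) = 0 := fun y => by
    by_cases hy : y ∈ S.image Prod.snd
    · exact hcol y hy
    · exact sum_eq_zero fun x _ => hd _ fun h => hy (mem_image_of_mem _ h)
  have hrow' : ∀ x ≠ x₀, ∑ y, d (x, y) = 0 := fun x hx => by
    by_cases hx' : x ∈ S.image Prod.fst
    · exact hrow x hx' hx
    · exact sum_eq_zero fun y _ => hd _ fun h => hx' (mem_image_of_mem _ h)
  have htotal : ∑ x, ∑ y, d (x, y) = ∑ y, d (x₀, y) :=
    sum_eq_single x₀ (fun x _ hx => hrow' x hx) (by simp)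
  refine ⟨fun x => ?_, hcol'⟩
  obtain rfl | hx := eq_or_ne x x₀
  · rw [← htotal, sum_comm]
    exact sum_eq_zero fun y _ => hcol' y
  · exact hrow' x hx

theorem MarginalIndep.card_lt {S : Finset (X × Y)} (hS : MarginalIndep S) (hne : S.Nonempty) :
    #S < #(S.image Prod.fst) + #(S.image Prod.snd) := by
  obtain ⟨p₀, hp₀⟩ := hne
  let R := (S.image Prod.fst).erase p₀.1
  let C := S.image Prod.snd
  let L : (S → ℝ) →ₗ[ℝ] (R → ℝ) × (C → ℝ) :=
    ((LinearMap.pi fun x : R => ∑ y, LinearMap.proj (x.1, y)).prod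
      (LinearMap.pi fun y : C => ∑ x, LinearMap.proj (x, y.1))) ∘ₗ
      Function.ExtendByZero.linearMap ℝ Subtype.val
  -- The marginals of a weight on `S` sum to the same total over rows and over columns, so the
  -- row `p₀.1` can be dropped without losing injectivity.
  have hL : Function.Injective L := by
    rw [← LinearMap.ker_eq_bot, LinearMap.ker_eq_bot']
    intro c hc
    set d : X × Y → ℝ := Function.extend Subtype.val c 0
    have hd : ∀ p ∉ S, d p = 0 := fun p hp =>
      Function.extend_apply' _ _ _ fun ⟨q, hq⟩ => hp (hq ▸ q.2)
    obtain ⟨hrow, hcol⟩ := marginals_eq_zero_of_forall_ne hd p₀.1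
      (fun x hx hx₀ => by
        simpa [L, d] using congr_fun (congr_arg Prod.fst hc) ⟨x, mem_erase.2 ⟨hx₀, hx⟩⟩)
      (fun y hy => by simpa [L, d] using congr_fun (congr_arg Prod.snd hc) ⟨y, hy⟩)
    funext q
    simpa [d, Subtype.val_injective.extend_apply] using congr_fun (hS d hd hrow hcol) q
  have hrank := LinearMap.finrank_le_finrank_of_injective hL
  simp only [Module.finrank_prod, Module.finrank_fintype_fun_eq_card, Fintype.card_coe] at hrank
  have hR : #R = #(S.image Prod.fst) - 1 := card_erase_of_mem (mem_image_of_mem Prod.fst hp₀)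
  have hR₀ : 0 < #(S.image Prod.fst) := card_pos.2 (image_nonempty.2 ⟨p₀, hp₀⟩)
  have hC : #C = #(S.image Prod.snd) := rfl
  omega

theorem MarginalIndep.exists_leaf {S : Finset (X × Y)} (hS : MarginalIndep S) (hne : S.Nonempty) :
    ∃ p ∈ S, (∀ q ∈ S, q.1 = p.1 → q = p) ∨ ∀ q ∈ S, q.2 = p.2 → q = p := by
  by_contra! h
  have hR : 2 * #(S.image Prod.fst) ≤ #S := mul_card_image_le_card S 2 fun x hx => by
    obtain ⟨p, hp, rfl⟩ := mem_image.1 hx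
    obtain ⟨q, hq, hqp, hne⟩ := (h p hp).1
    exact one_lt_card.2 ⟨p, by simp [hp], q, by simp [hq, hqp], hne.symm⟩
  have hC : 2 * #(S.image Prod.snd) ≤ #S := mul_card_image_le_card S 2 fun y hy => by
    obtain ⟨p, hp, rfl⟩ := mem_image.1 hy
    obtain ⟨q, hq, hqp, hne⟩ := (h p hp).2
    exact one_lt_card.2 ⟨p, by simp [hp], q, by simp [hq, hqp], hne.symm⟩
  have := hS.card_lt hne
  omega

/-- A forest is recovered from the parent maps obtained by pruning it leaf by leaf: `f y = x`
records an edge `(x, y)` removed as a leaf at `y`, `g x = y` one removed as a leaf at `x`. -/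
def ofPartialMaps (f : Y → Option X) (g : X → Option Y) : Finset (X × Y) :=
  univ.filter fun p => f p.2 = some p.1 ∨ g p.1 = some p.2

theorem ofPartialMaps_update_right {f : Y → Option X} {g : X → Option Y} {x : X} (y : Y)
    (h : ∀ q ∈ ofPartialMaps f g, q.1 ≠ x) :
    ofPartialMaps f (Function.update g x (some y)) = insert (x, y) (ofPartialMaps f g) := by
  ext ⟨a, b⟩
  by_cases ha : a = x
  · subst ha
    have := h (a, b)
    simp_all [ofPartialMaps, eq_comm]
  · simp [ofPartialMaps, ha]

theorem ofPartialMaps_update_left {f : Y → Option X} {g : X → Option Y} (x : X) {y : Y}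
    (h : ∀ q ∈ ofPartialMaps f g, q.2 ≠ y) :
    ofPartialMaps (Function.update f y (some x)) g = insert (x, y) (ofPartialMaps f g) := by
  ext ⟨a, b⟩
  by_cases hb : b = y
  · subst hb
    have := h (a, b)
    simp_all [ofPartialMaps, eq_comm]
  · simp [ofPartialMaps, hb]

theorem MarginalIndep.exists_ofPartialMaps_eq {S : Finset (X × Y)} (hS : MarginalIndep S) :
    ∃ f g, ofPartialMaps f g = S := by
  induction S using strongInduction with
  | H S ih =>
  obtain rfl | hne := S.eq_empty_or_nonempty
  · exact ⟨fun _ => none, fun _ => none, by simp [ofPartialMaps]⟩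
  obtain ⟨p, hp, hleaf⟩ := hS.exists_leaf hne
  obtain ⟨f, g, hfg⟩ := ih _ (erase_ssubset hp) (hS.mono (erase_subset p S))
  rcases hleaf with hrow | hcol
  · refine ⟨f, Function.update g p.1 (some p.2), ?_⟩
    rw [ofPartialMaps_update_right _ fun q hq hqp => ?_, hfg, insert_erase hp]
    rw [hfg] at hq
    exact (mem_erase.1 hq).1 (hrow q (mem_of_mem_erase hq) hqp)
  · refine ⟨Function.update f p.2 (some p.1), g, ?_⟩
    rw [ofPartialMaps_update_left _ fun q hq hqp => ?_, hfg, insert_erase hp]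
    rw [hfg] at hq
    exact (mem_erase.1 hq).1 (hcol q (mem_of_mem_erase hq) hqp)

end MarginalIndep

section Kset

variable {X Y : Type} [Fintype X] [Fintype Y] {μ₁ : X → ℝ} {μ₂ : Y → ℝ}

theorem eventually_add_smul_mem_Kset {w d : X × Y → ℝ} (hw : w ∈ Kset μ₁ μ₂)
    (hd : ∀ p, w p = 0 → d p = 0) (hrow : ∀ x, ∑ y, d (x, y) = 0) (hcol : ∀ y, ∑ x, d (x, y) = 0) :
    ∀ᶠ t in 𝓝 (0 : ℝ), w + t • d ∈ Kset μ₁ μ₂ := by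
  obtain ⟨hpos, hμ₁, hμ₂⟩ := hw
  have hnonneg : ∀ᶠ t in 𝓝 (0 : ℝ), ∀ p, 0 ≤ w p + t * d p := eventually_all.2 fun p => by
    rcases (hpos p).eq_or_lt with h | h
    · simp [← h, hd p h.symm]
    · have : Tendsto (fun t : ℝ => w p + t * d p) (𝓝 0) (𝓝 (w p)) := by
        simpa using (tendsto_const_nhds (x := w p)).add
          ((tendsto_id (x := 𝓝 (0 : ℝ))).mul_const (d p))
      exact (this.eventually (lt_mem_nhds h)).mono fun _ => le_of_lt
  filter_upwards [hnonneg] with t ht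
  refine ⟨ht, fun x => ?_, fun y => ?_⟩
  · simp [sum_add_distrib, ← mul_sum, hrow, hμ₁]
  · simp [sum_add_distrib, ← mul_sum, hcol, hμ₂]

theorem marginalIndep_support_of_mem_extremePoints {w : X × Y → ℝ}
    (hw : w ∈ (Kset μ₁ μ₂).extremePoints ℝ) : MarginalIndep (univ.filter fun p => w p ≠ 0) := by
  intro d hd hrow hcol
  have h := eventually_add_smul_mem_Kset hw.1 (fun p hp => hd p (by simp [hp])) hrow hcol
  have hneg : ∀ᶠ t in 𝓝 (0 : ℝ), w + (-t) • d ∈ Kset μ₁ μ₂ :=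
    (continuous_neg.tendsto' 0 0 neg_zero).eventually h
  obtain ⟨t, ht, hplus, hminus⟩ := (h.and hneg).exists_gt
  have : w + t • d = w := hw.2 hplus hminus ⟨1 / 2, 1 / 2, by norm_num, by norm_num, by norm_num, by
    ext; simp; ring⟩
  simpa [ht.ne'] using this

theorem MarginalIndep.eq_of_mem_Kset {S : Finset (X × Y)} (hS : MarginalIndep S)
    {w₁ w₂ : X × Y → ℝ} (h₁ : w₁ ∈ Kset μ₁ μ₂) (h₂ : w₂ ∈ Kset μ₁ μ₂)
    (hw₁ : ∀ p ∉ S, w₁ p = 0) (hw₂ : ∀ p ∉ S, w₂ p = 0) : w₁ = w₂ :=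
  sub_eq_zero.1 <| hS _ (fun p hp => by simp [hw₁ p hp, hw₂ p hp])
    (fun x => by simp [sum_sub_distrib, h₁.2.1, h₂.2.1])
    (fun y => by simp [sum_sub_distrib, h₁.2.2, h₂.2.2])

theorem ncard_extremePoints_Kset_le (μ₁ : X → ℝ) (μ₂ : Y → ℝ) :
    ((Kset μ₁ μ₂).extremePoints ℝ).ncard ≤
      (Fintype.card X + 1) ^ Fintype.card Y * (Fintype.card Y + 1) ^ Fintype.card X := by
  classical
  let supp : (X × Y → ℝ) → Finset (X × Y) := fun w => univ.filter fun p => w p ≠ 0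
  calc ((Kset μ₁ μ₂).extremePoints ℝ).ncard
      ≤ (Set.range (Function.uncurry (ofPartialMaps (X := X) (Y := Y)))).ncard := by
        refine Set.ncard_le_ncard_of_injOn supp (fun w hw => ?_) (fun w₁ h₁ w₂ h₂ h => ?_)
        · obtain ⟨f, g, hfg⟩ :=
            (marginalIndep_support_of_mem_extremePoints hw).exists_ofPartialMaps_eq
          exact ⟨(f, g), hfg⟩
        · refine (marginalIndep_support_of_mem_extremePoints h₁).eq_of_mem_Kset h₁.1 h₂.1
            (fun p hp => ?_) (fun p hp => ?_)
          · simpa [supp] using hp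
          · simpa [supp, h] using hp
    _ ≤ Nat.card ((Y → Option X) × (X → Option Y)) := by
        rw [← Set.image_univ]
        exact (Set.ncard_image_le Set.finite_univ).trans (Set.ncard_univ _).le
    _ = _ := by simp [Nat.card_eq_fintype_card]

end Kset

section Asymptotics

open Real

theorem factorial_le_stirling {n : ℕ} (hn : n ≠ 0) :
    (n ! : ℝ) ≤ exp 1 * √n * (n / exp 1) ^ n := by
  have h : Stirling.stirlingSeq n ≤ exp 1 / √2 := by
    obtain ⟨k, rfl⟩ := Nat.exists_eq_succ_of_ne_zero hn
    simpa using Stirling.stirlingSeq'_antitone (Nat.zero_le k)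
  rw [Stirling.stirlingSeq, div_le_iff₀ (by positivity), sqrt_mul zero_le_two] at h
  calc (n ! : ℝ) ≤ exp 1 / √2 * (√2 * √n * (n / exp 1) ^ n) := h
    _ = exp 1 * √n * (n / exp 1) ^ n := by field_simp

theorem factorial_add_le (p q : ℕ) : (p + q)! ≤ 2 ^ (p + q) * p ! * q ! := by
  rw [← Nat.add_choose_mul_factorial_mul_factorial, mul_assoc, mul_assoc]
  exact Nat.mul_le_mul_right _ (Nat.choose_le_two_pow _ _)

theorem pow_le_factorial_mul_choose (p q : ℕ) :
    (p * q) ^ (p + q + 1) ≤ (p + q + 1)! * ((p + 1) * (q + 1)).choose (p + q + 1) := by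
  rw [← Nat.descFactorial_eq_factorial_mul_choose]
  refine le_trans (Nat.pow_le_pow_left ?_ _) (Nat.pow_sub_le_descFactorial _ _)
  have : (p + 1) * (q + 1) = p * q + (p + q + 1) := by ring
  omega

theorem factorial_le_mul_pow {n : ℕ} (hn : n ≠ 0) :
    (n ! : ℝ) ≤ exp 1 * n * (n / exp 1) ^ n := by
  have h1 : (1 : ℝ) ≤ n := by exact_mod_cast Nat.one_le_iff_ne_zero.2 hn
  calc (n ! : ℝ) ≤ exp 1 * √n * (n / exp 1) ^ n := factorial_le_stirling hn
    _ ≤ exp 1 * n * (n / exp 1) ^ n := by gcongr; exact sqrt_le_self_iff.2 (Or.inr h1)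

theorem add_two_pow_le {x : ℝ} (hx : 8 ≤ x) (k : ℕ) : (x + 2) ^ k ≤ (5 / 4) ^ k * x ^ k := by
  rw [← mul_pow]
  exact pow_le_pow_left₀ (by linarith) (by linarith) k

/-- The base `5 / 2 / e = 2 * (5 / 4) / e` collects `2` from `(p + q)! ≤ 2 ^ (p + q) * p! * q!`,
`5 / 4` from `p + 2 ≤ 5 p / 4` and `1 / e` from Stirling's bound. -/
theorem add_two_pow_mul_add_two_pow_mul_factorial_le {p q : ℕ} (hp : 8 ≤ p) (hq : 8 ≤ q) :
    ((p + 2 : ℝ) ^ (q + 1) * (q + 2) ^ (p + 1)) * (p + q + 1)! ≤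
      exp 1 ^ 2 * ((p + q + 1) * (p + 2) * (q + 2)) * (5 / 2 / exp 1) ^ (p + q) *
        ((p : ℝ) * q) ^ (p + q + 1) := by
  have hk : ((p + q + 1)! : ℝ) ≤ (p + q + 1) * (2 ^ (p + q) * p ! * q !) := by
    rw [Nat.factorial_succ]
    exact_mod_cast Nat.mul_le_mul_left _ (factorial_add_le p q)
  have hx : (8 : ℝ) ≤ p := by exact_mod_cast hp
  have hy : (8 : ℝ) ≤ q := by exact_mod_cast hq
  have hx2 := add_two_pow_le hx q
  have hy2 := add_two_pow_le hy p
  have hp! := factorial_le_mul_pow (n := p) (by omega)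
  have hq! := factorial_le_mul_pow (n := q) (by omega)
  calc ((p + 2 : ℝ) ^ (q + 1) * (q + 2) ^ (p + 1)) * (p + q + 1)!
      ≤ ((p + 2) * ((5 / 4) ^ q * p ^ q) * ((q + 2) * ((5 / 4) ^ p * q ^ p))) *
          ((p + q + 1) * (2 ^ (p + q) * (exp 1 * p * (p / exp 1) ^ p) *
            (exp 1 * q * (q / exp 1) ^ q))) := by
        rw [pow_succ', pow_succ' _ p]
        gcongr
        exact hk.trans (by gcongr)
    _ = _ := by
        rw [show (5 / 2 : ℝ) = 2 * (5 / 4) by norm_num, div_pow (2 * (5 / 4) : ℝ), mul_pow (2 : ℝ),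
          mul_pow (p : ℝ)]
        ring

theorem succ_pow_mul_succ_pow_div_choose_le {m n : ℕ} (hm : 9 ≤ m) (hn : 9 ≤ n) :
    (((m + 1) ^ n * (n + 1) ^ m : ℕ) : ℝ) / (m * n).choose (m + n - 1) ≤
      (exp 1 / (5 / 2 / exp 1)) ^ 2 * (((m + n : ℕ) : ℝ) ^ 3 * (5 / 2 / exp 1) ^ (m + n)) := by
  obtain ⟨p, rfl⟩ : ∃ p, m = p + 1 := ⟨m - 1, by omega⟩
  obtain ⟨q, rfl⟩ : ∃ q, n = q + 1 := ⟨n - 1, by omega⟩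
  rw [show p + 1 + (q + 1) - 1 = p + q + 1 by omega,
    div_le_iff₀ (by exact_mod_cast Nat.choose_pos (by nlinarith))]
  have hC : ((p : ℝ) * q) ^ (p + q + 1) ≤
      (p + q + 1)! * ((p + 1) * (q + 1) : ℕ).choose (p + q + 1) := by
    exact_mod_cast pow_le_factorial_mul_choose p q
  have hmain := (add_two_pow_mul_add_two_pow_mul_factorial_le (p := p) (q := q) (by omega)
    (by omega)).trans (mul_le_mul_of_nonneg_left hC (by positivity))
  have hpoly : ((p : ℝ) + q + 1) * (p + 2) * (q + 2) ≤ (p + q + 2) ^ 3 := by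
    have : (0 : ℝ) ≤ p := p.cast_nonneg
    have : (0 : ℝ) ≤ q := q.cast_nonneg
    rw [pow_three, ← mul_assoc]
    gcongr ?_ * ?_ * ?_ <;> linarith
  have hbound : exp 1 ^ 2 * (((p : ℝ) + q + 1) * (p + 2) * (q + 2)) * (5 / 2 / exp 1) ^ (p + q) ≤
      (exp 1 / (5 / 2 / exp 1)) ^ 2 *
        (((p + 1 + (q + 1) : ℕ) : ℝ) ^ 3 * (5 / 2 / exp 1) ^ (p + 1 + (q + 1))) := by
    calc _ ≤ exp 1 ^ 2 * ((p : ℝ) + q + 2) ^ 3 * (5 / 2 / exp 1) ^ (p + q) := by gcongr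
      _ = _ := by
        have hρ : (5 / 2 / exp 1 : ℝ) ≠ 0 := by positivity
        generalize (5 / 2 / exp 1 : ℝ) = ρ at hρ ⊢
        rw [show p + 1 + (q + 1) = p + q + 2 by omega]
        push_cast
        field_simp
        ring
  rw [show (((p + 1 + 1) ^ (q + 1) * (q + 1 + 1) ^ (p + 1) : ℕ) : ℝ) =
      (p + 2) ^ (q + 1) * (q + 2) ^ (p + 1) by push_cast; ring]
  refine le_of_mul_le_mul_right (hmain.trans ?_) (by positivity : (0 : ℝ) < (p + q + 1)!)
  rw [mul_comm ((p + q + 1)! : ℝ), ← mul_assoc]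
  gcongr

theorem tendsto_succ_pow_mul_succ_pow_div_choose :
    Tendsto (fun mn : ℕ × ℕ => (((mn.1 + 1) ^ mn.2 * (mn.2 + 1) ^ mn.1 : ℕ) : ℝ) /
      (mn.1 * mn.2).choose (mn.1 + mn.2 - 1)) atTop (𝓝 0) := by
  have hρ : 5 / 2 / exp 1 < 1 := by rw [div_lt_one (exp_pos 1)]; linarith [exp_one_gt_d9]
  have hsum : Tendsto (fun mn : ℕ × ℕ => mn.1 + mn.2) atTop atTop :=
    tendsto_atTop_atTop.2 fun b => ⟨(b, 0), fun _ h => h.1.trans (Nat.le_add_right _ _)⟩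
  have hbound := ((tendsto_pow_const_mul_const_pow_of_lt_one 3 (by positivity) hρ).comp
    hsum).const_mul ((exp 1 / (5 / 2 / exp 1)) ^ 2)
  rw [mul_zero] at hbound
  refine squeeze_zero' (.of_forall fun _ => by positivity) ?_ hbound
  filter_upwards [eventually_ge_atTop (9, 9)] with ⟨m, n⟩ h
  exact succ_pow_mul_succ_pow_div_choose_le h.1 h.2

end Asymptotics

theorem stmt_19 :
    (∀ ε : ℝ, 0 < ε → ∃ N : ℕ, ∀ m₁ n₁ : ℕ, N ≤ m₁ → N ≤ n₁ →
      ((m₁ ^ (n₁ - 1) * n₁ ^ (m₁ - 1) : ℕ) : ℝ) /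
          ((m₁ * n₁).choose (m₁ + n₁ - 1) : ℝ) < ε) ∧
    (∀ ε : ℝ, 0 < ε → ∃ N : ℕ, ∀ m₁ n₁ : ℕ, N ≤ m₁ → N ≤ n₁ →
      ∀ (X Y : Type) (_ : Fintype X) (_ : Fintype Y),
        Fintype.card X = m₁ → Fintype.card Y = n₁ →
        ∀ (μ₁ : X → ℝ) (μ₂ : Y → ℝ),
          (∀ x, 0 < μ₁ x) → (∀ y, 0 < μ₂ y) →
          (∑ x, μ₁ x = 1) → (∑ y, μ₂ y = 1) →
          ((Set.extremePoints ℝ (Kset μ₁ μ₂)).ncard : ℝ) /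
              ((m₁ * n₁).choose (m₁ + n₁ - 1) : ℝ) < ε) := by
  have hsmall : ∀ ε : ℝ, 0 < ε → ∃ N : ℕ, ∀ m n : ℕ, N ≤ m → N ≤ n → ∀ a : ℕ,
      a ≤ (m + 1) ^ n * (n + 1) ^ m → (a : ℝ) / (m * n).choose (m + n - 1) < ε := by
    intro ε hε
    obtain ⟨N, hN⟩ := eventually_atTop_prod_self'.1
      (tendsto_succ_pow_mul_succ_pow_div_choose.eventually (gt_mem_nhds hε))
    refine ⟨N, fun m n hm hn a ha => lt_of_le_of_lt ?_ (hN m hm n hn)⟩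
    gcongr
  refine ⟨fun ε hε => ?_, fun ε hε => ?_⟩
  · obtain ⟨N, hN⟩ := hsmall ε hε
    refine ⟨N, fun m n hm hn => hN m n hm hn _ (Nat.mul_le_mul ?_ ?_)⟩
    · exact (Nat.pow_le_pow_left m.le_succ _).trans (Nat.pow_le_pow_right m.succ_pos n.pred_le)
    · exact (Nat.pow_le_pow_left n.le_succ _).trans (Nat.pow_le_pow_right n.succ_pos m.pred_le)
  · obtain ⟨N, hN⟩ := hsmall ε hε
    refine ⟨N, fun m n hm hn X Y _ _ hX hY μ₁ μ₂ _ _ _ _ => hN m n hm hn _ ?_⟩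
    simpa [hX, hY] using ncard_extremePoints_Kset_le μ₁ μ₂
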